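/- arXiv:2506.12087 — 5 statements merged into one kernel-verified Lean document; each statement's English description precedes it below -/
import Mathlib

section
/- Let T ≥ 1 be an integer, 0 < λ < 1, V_th > 0, and let Λ ∈ ℝ^{T×T} be the decay matrix with entries Λ_{ij} = λ^{i−j} for i ≥ j and 0 otherwise. Let S : ℝ → ℝ be Lipschitz continuous with constant L_α, applied entrywise to vectors, and let c ∈ ℝ^T. If V_th · L_α · λ(1 − λ^{T−1})/(1 − λ) < 1, then the map Φ̂(u) = −V_th (Λ − I) S(u − V_th·𝟙) + Λ c is a contraction on ℝ^T with respect to the ℓ¹ norm, and hence has a unique fixed point u_* to which the iteration u_{(k)} = Φ̂(u_{(k−1)}) converges from any initial point. -/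
open Filter Topology
open scoped ENNReal NNReal

/-- The decay matrix `Λ` with entries `Λ_{ij} = λ^{i−j}` for `i ≥ j` and `0` otherwise. -/
noncomputable def decayMatrix (T : ℕ) (lam : ℝ) : Matrix (Fin T) (Fin T) ℝ :=
  fun i j => if (j : ℕ) ≤ (i : ℕ) then lam ^ ((i : ℕ) - (j : ℕ)) else 0

/-- The surrogate fixed-point map `Φ̂(u) = −V_th (Λ − I) S(u − V_th·𝟙) + Λ c`,
with `S` applied entrywise. -/
noncomputable def PhiHat (T : ℕ) (lam Vth : ℝ) (S : ℝ → ℝ) (c : Fin T → ℝ)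
    (u : Fin T → ℝ) : Fin T → ℝ :=
  fun t => (-Vth) * ((decayMatrix T lam - 1).mulVec (fun i => S (u i - Vth))) t
    + ((decayMatrix T lam).mulVec c) t

lemma colsum (T : ℕ) (lam : ℝ) (hlam0 : 0 < lam) (hlam1 : lam < 1) (j : Fin T) :
    ∑ t : Fin T, |(decayMatrix T lam - 1) t j| ≤ lam * (1 - lam ^ (T - 1)) / (1 - lam) := by
  have habs : ∀ t : Fin T, |(decayMatrix T lam - 1) t j|
      = (fun i : ℕ => if (j : ℕ) < i then lam ^ (i - (j : ℕ)) else 0) ((t : ℕ)) := by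
    intro t
    simp only [Matrix.sub_apply, decayMatrix, Matrix.one_apply]
    rcases lt_trichotomy ((j : ℕ)) ((t : ℕ)) with h | h | h
    · rw [if_pos h.le, if_neg (by intro he; subst he; exact lt_irrefl _ h), if_pos h, sub_zero,
        abs_of_pos (pow_pos hlam0 _)]
    · have : t = j := Fin.ext h.symm
      subst this
      simp
    · rw [if_neg (by omega), if_neg (by intro he; subst he; exact lt_irrefl _ h),
        if_neg (by omega)]
      simp
  calc ∑ t : Fin T, |(decayMatrix T lam - 1) t j|
      = ∑ i ∈ Finset.range T, (if (j : ℕ) < i then lam ^ (i - (j : ℕ)) else 0) := by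
        simp only [habs]
        exact Fin.sum_univ_eq_sum_range (fun i : ℕ => if (j : ℕ) < i then lam ^ (i - (j : ℕ)) else 0) T
    _ = ∑ i ∈ Finset.Ico ((j : ℕ) + 1) T, (if (j : ℕ) < i then lam ^ (i - (j : ℕ)) else 0) := by
        refine (Finset.sum_subset ?_ ?_).symm
        · intro i hi; simp only [Finset.mem_Ico] at hi; exact Finset.mem_range.mpr hi.2
        · intro i hi hni
          simp only [Finset.mem_range] at hi
          simp only [Finset.mem_Ico, not_and, not_lt] at hni
          rw [if_neg (by omega)]
    _ = ∑ k ∈ Finset.range (T - ((j : ℕ) + 1)), lam ^ (k + 1) := by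
        rw [Finset.sum_Ico_eq_sum_range]
        refine Finset.sum_congr rfl fun k _ => ?_
        rw [if_pos (by omega)]
        congr 1
        omega
    _ ≤ ∑ k ∈ Finset.range (T - 1), lam ^ (k + 1) := by
        refine Finset.sum_le_sum_of_subset_of_nonneg
          (Finset.range_subset_range.mpr (by omega)) fun k _ _ => (pow_pos hlam0 _).le
    _ = lam * ∑ k ∈ Finset.range (T - 1), lam ^ k := by
        rw [Finset.mul_sum]
        exact Finset.sum_congr rfl fun k _ => by ring
    _ = lam * (1 - lam ^ (T - 1)) / (1 - lam) := by
        rw [geom_sum_eq (by linarith : lam ≠ 1), mul_div_assoc,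
          show (1 - lam ^ (T - 1)) = -(lam ^ (T - 1) - 1) by ring,
          show (1 - lam) = -(lam - 1) by ring, neg_div_neg_eq]
lemma key_contraction (T : ℕ) (lam Vth Lα : ℝ)
    (hlam0 : 0 < lam) (hlam1 : lam < 1) (hVth : 0 < Vth)
    (hL : 0 ≤ Lα)
    (hcol : ∀ j : Fin T, ∑ t : Fin T, |(decayMatrix T lam - 1) t j|
      ≤ lam * (1 - lam ^ (T - 1)) / (1 - lam))
    (S : ℝ → ℝ) (hS : ∀ x y : ℝ, |S x - S y| ≤ Lα * |x - y|)
    (c : Fin T → ℝ) (u₁ u₂ : Fin T → ℝ) :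
    ∑ t, |PhiHat T lam Vth S c u₁ t - PhiHat T lam Vth S c u₂ t| ≤
      Vth * Lα * (lam * (1 - lam ^ (T - 1)) / (1 - lam)) * ∑ t, |u₁ t - u₂ t| := by
  set M := decayMatrix T lam - 1 with hM
  set C := lam * (1 - lam ^ (T - 1)) / (1 - lam) with hC
  calc ∑ t, |PhiHat T lam Vth S c u₁ t - PhiHat T lam Vth S c u₂ t|
      ≤ ∑ t, ∑ j, Vth * (|M t j| * (Lα * |u₁ j - u₂ j|)) := by
        refine Finset.sum_le_sum fun t _ => ?_
        have heq : PhiHat T lam Vth S c u₁ t - PhiHat T lam Vth S c u₂ t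
            = ∑ j, (-Vth) * (M t j * (S (u₁ j - Vth) - S (u₂ j - Vth))) := by
          simp only [PhiHat, Matrix.mulVec, dotProduct, Finset.mul_sum]
          rw [add_sub_add_right_eq_sub, ← Finset.sum_sub_distrib]
          exact Finset.sum_congr rfl fun j _ => by ring
        rw [heq]
        refine le_trans (Finset.abs_sum_le_sum_abs _ _) (Finset.sum_le_sum fun j _ => ?_)
        rw [abs_mul, abs_mul, abs_neg, abs_of_pos hVth]
        refine mul_le_mul_of_nonneg_left (mul_le_mul_of_nonneg_left ?_ (abs_nonneg _)) hVth.le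
        have := hS (u₁ j - Vth) (u₂ j - Vth)
        simpa [sub_sub_sub_cancel_right] using this
    _ = ∑ j, (Vth * (Lα * |u₁ j - u₂ j|)) * ∑ t, |M t j| := by
        rw [Finset.sum_comm]
        refine Finset.sum_congr rfl fun j _ => ?_
        rw [Finset.mul_sum]
        exact Finset.sum_congr rfl fun t _ => by ring
    _ ≤ ∑ j, (Vth * (Lα * |u₁ j - u₂ j|)) * C := by
        refine Finset.sum_le_sum fun j _ => ?_
        exact mul_le_mul_of_nonneg_left (hcol j)
          (mul_nonneg hVth.le (mul_nonneg hL (abs_nonneg _)))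
    _ = Vth * Lα * C * ∑ t, |u₁ t - u₂ t| := by
        rw [Finset.mul_sum]
        exact Finset.sum_congr rfl fun j _ => by ring

set_option maxHeartbeats 1000000 in
theorem stmt_0 (T : ℕ) (hT : 1 ≤ T) (lam Vth Lα : ℝ)
    (hlam0 : 0 < lam) (hlam1 : lam < 1) (hVth : 0 < Vth)
    (S : ℝ → ℝ) (hS : ∀ x y : ℝ, |S x - S y| ≤ Lα * |x - y|)
    (c : Fin T → ℝ)
    (hcond : Vth * Lα * (lam * (1 - lam ^ (T - 1)) / (1 - lam)) < 1) :
    (∀ u₁ u₂ : Fin T → ℝ,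
      ∑ t, |PhiHat T lam Vth S c u₁ t - PhiHat T lam Vth S c u₂ t| ≤
        Vth * Lα * (lam * (1 - lam ^ (T - 1)) / (1 - lam)) * ∑ t, |u₁ t - u₂ t|) ∧
    ∃ ustar : Fin T → ℝ, PhiHat T lam Vth S c ustar = ustar ∧
      (∀ v : Fin T → ℝ, PhiHat T lam Vth S c v = v → v = ustar) ∧
      ∀ u₀ : Fin T → ℝ,
        Tendsto (fun k => (PhiHat T lam Vth S c)^[k] u₀) atTop (𝓝 ustar) := by
  have hL : 0 ≤ Lα := le_trans (abs_nonneg _) (by simpa using hS 0 1)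
  have hcontr := key_contraction T lam Vth Lα hlam0 hlam1 hVth hL
    (colsum T lam hlam0 hlam1) S hS c
  refine ⟨hcontr, ?_⟩
  have hC0 : 0 ≤ Vth * Lα * (lam * (1 - lam ^ (T - 1)) / (1 - lam)) := by
    have h1 : (0:ℝ) ≤ 1 - lam ^ (T - 1) := by
      have := pow_le_one₀ hlam0.le hlam1.le (n := T - 1)
      linarith
    have h2 : (0:ℝ) < 1 - lam := by linarith
    positivity
  set K : NNReal := ⟨Vth * Lα * (lam * (1 - lam ^ (T - 1)) / (1 - lam)), hC0⟩ with hK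
  haveI : Nonempty (PiLp 1 fun _ : Fin T => ℝ) := ⟨0⟩
  set F : PiLp 1 (fun _ : Fin T => ℝ) → PiLp 1 (fun _ : Fin T => ℝ) :=
    fun x => WithLp.toLp 1 (PhiHat T lam Vth S c (WithLp.ofLp x)) with hF
  have hd : ∀ x y : PiLp 1 fun _ : Fin T => ℝ, dist x y = ∑ t, |x t - y t| := by
    intro x y
    rw [PiLp.dist_eq_sum (by norm_num : 0 < (1:ℝ≥0∞).toReal)]
    simp [ENNReal.toReal_one, Real.rpow_one, Real.dist_eq]
  have hFc : ContractingWith K F := by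
    constructor
    · exact_mod_cast hcond
    · refine LipschitzWith.of_dist_le_mul fun u v => ?_
      rw [hd, hd]
      exact hcontr (WithLp.ofLp u) (WithLp.ofLp v)
  set ustar : PiLp 1 (fun _ : Fin T => ℝ) := ContractingWith.fixedPoint F hFc with hus
  have hfix : Function.IsFixedPt F ustar := hFc.fixedPoint_isFixedPt
  have hit : ∀ n (x : PiLp 1 (fun _ : Fin T => ℝ)),
      WithLp.ofLp (F^[n] x) = (PhiHat T lam Vth S c)^[n] (WithLp.ofLp x) := by
    intro n
    induction n with
    | zero => intro x; rfl
    | succ n ih =>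
      intro x
      rw [Function.iterate_succ_apply', Function.iterate_succ_apply', ← ih]
  refine ⟨WithLp.ofLp ustar, congrArg WithLp.ofLp hfix, ?_, ?_⟩
  · intro v hv
    exact congrArg WithLp.ofLp
      (hFc.fixedPoint_unique (x := WithLp.toLp 1 v) (congrArg (WithLp.toLp 1) hv))
  · intro u₀
    have ht := hFc.tendsto_iterate_fixedPoint (WithLp.toLp 1 u₀ : PiLp 1 (fun _ : Fin T => ℝ))
    exact ((((PiLp.continuous_ofLp (p := 1) (β := fun _ : Fin T => ℝ)).tendsto _).comp ht).congr
      (fun k => hit k _))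
end

section
/- Let T ≥ 1 be an integer, 0 < λ < 1, V_th > 0, and let Λ ∈ ℝ^{T×T} be the decay matrix with entries Λ_{ij} = λ^{i−j} for i ≥ j and 0 otherwise. Let S : ℝ → ℝ be Lipschitz continuous with constant L_α, applied entrywise, and let c ∈ ℝ^T. Then for all u₁, u₂ ∈ ℝ^T, the map Φ̂(u) = −V_th (Λ − I) S(u − V_th·𝟙) + Λ c satisfies ‖Φ̂(u₁) − Φ̂(u₂)‖₁ ≤ V_th · L_α · (λ(1 − λ^{T−1})/(1 − λ)) · ‖u₁ − u₂‖₁. -/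
lemma entry_eq (T : ℕ) (lam : ℝ) (t j : Fin T) :
    (decayMatrix T lam - 1) t j =
      if (j : ℕ) < (t : ℕ) then lam ^ ((t : ℕ) - (j : ℕ)) else 0 := by
  simp only [Matrix.sub_apply, Matrix.one_apply, decayMatrix]
  rcases lt_trichotomy (j : ℕ) (t : ℕ) with h | h | h
  · rw [if_pos h.le, if_pos h, if_neg (by intro he; subst he; exact lt_irrefl _ h)]
    ring
  · have : t = j := Fin.ext h.symm
    subst this
    simp
  · rw [if_neg (not_le.mpr h), if_neg (not_lt.mpr h.le),
      if_neg (by intro he; subst he; exact lt_irrefl _ h)]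
    ring

lemma col_sum_le (T : ℕ) (lam : ℝ) (hlam0 : 0 < lam) (j : Fin T) :
    ∑ t : Fin T, |(decayMatrix T lam - 1) t j| ≤ ∑ k ∈ Finset.Ico 1 T, lam ^ k := by
  have h1 : ∀ t : Fin T, |(decayMatrix T lam - 1) t j| =
      if (j : ℕ) < (t : ℕ) then lam ^ ((t : ℕ) - (j : ℕ)) else 0 := by
    intro t
    rw [entry_eq]
    split
    · exact abs_of_nonneg (pow_nonneg hlam0.le _)
    · exact abs_zero
  simp only [h1]
  rw [← Finset.sum_filter]
  set s : Finset (Fin T) := Finset.univ.filter (fun t : Fin T => (j : ℕ) < (t : ℕ)) with hs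
  have hinj : ∀ x ∈ s, ∀ y ∈ s, (x : ℕ) - (j : ℕ) = (y : ℕ) - (j : ℕ) → x = y := by
    intro x hx y hy hxy
    simp only [hs, Finset.mem_filter, Finset.mem_univ, true_and] at hx hy
    exact Fin.ext (by omega)
  have himg : ∑ k ∈ s.image (fun t : Fin T => (t : ℕ) - (j : ℕ)), lam ^ k
      = ∑ t ∈ s, lam ^ ((t : ℕ) - (j : ℕ)) := Finset.sum_image hinj
  rw [← himg]
  apply Finset.sum_le_sum_of_subset_of_nonneg
  · intro k hk
    simp only [Finset.mem_image, hs, Finset.mem_filter, Finset.mem_univ, true_and] at hk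
    obtain ⟨t, ht, hkt⟩ := hk
    have := t.isLt
    simp only [Finset.mem_Ico]
    omega
  · intro k _ _
    exact pow_nonneg hlam0.le _

theorem stmt_1 (T : ℕ) (hT : 1 ≤ T) (lam Vth Lα : ℝ)
    (hlam0 : 0 < lam) (hlam1 : lam < 1) (hVth : 0 < Vth)
    (S : ℝ → ℝ) (hS : ∀ x y : ℝ, |S x - S y| ≤ Lα * |x - y|)
    (c : Fin T → ℝ) :
    ∀ u₁ u₂ : Fin T → ℝ,
      ∑ t, |PhiHat T lam Vth S c u₁ t - PhiHat T lam Vth S c u₂ t| ≤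
        Vth * Lα * (lam * (1 - lam ^ (T - 1)) / (1 - lam)) * ∑ t, |u₁ t - u₂ t| := by
  intro u₁ u₂
  have hL : 0 ≤ Lα := by
    have h := hS 1 0
    simp at h
    nlinarith [abs_nonneg (S 1 - S 0)]
  set M := decayMatrix T lam - 1 with hM
  set d : Fin T → ℝ := fun j => S (u₁ j - Vth) - S (u₂ j - Vth) with hd
  set G : ℝ := ∑ k ∈ Finset.Ico 1 T, lam ^ k with hGdef
  have hGnonneg : 0 ≤ G :=
    Finset.sum_nonneg fun k _ => pow_nonneg hlam0.le _
  have hGval : G = lam * (1 - lam ^ (T - 1)) / (1 - lam) := by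
    have hne : lam ≠ 1 := ne_of_lt hlam1
    rw [hGdef, geom_sum_Ico hne hT]
    have hTs : T = 1 + (T - 1) := by omega
    have hpow : lam ^ T = lam * lam ^ (T - 1) := by
      conv_lhs => rw [hTs]
      rw [pow_add, pow_one]
    rw [hpow]
    have h1 : lam - 1 ≠ 0 := sub_ne_zero.mpr hne
    have h2 : (1 : ℝ) - lam ≠ 0 := sub_ne_zero.mpr hne.symm
    field_simp
    ring
  have hdiff : ∀ t, PhiHat T lam Vth S c u₁ t - PhiHat T lam Vth S c u₂ t
      = -Vth * ∑ j, M t j * d j := by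
    intro t
    simp only [PhiHat, Matrix.mulVec, dotProduct, hd, hM]
    have key : (∑ x, (decayMatrix T lam - 1) t x * S (u₁ x - Vth))
        - (∑ x, (decayMatrix T lam - 1) t x * S (u₂ x - Vth))
        = ∑ x, (decayMatrix T lam - 1) t x * (S (u₁ x - Vth) - S (u₂ x - Vth)) := by
      rw [← Finset.sum_sub_distrib]
      exact Finset.sum_congr rfl fun i _ => by ring
    rw [← key]
    ring
  calc ∑ t, |PhiHat T lam Vth S c u₁ t - PhiHat T lam Vth S c u₂ t|
      ≤ ∑ t, Vth * ∑ j, |M t j| * |d j| := by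
        apply Finset.sum_le_sum
        intro t _
        rw [hdiff t, abs_mul, abs_neg, abs_of_pos hVth]
        apply mul_le_mul_of_nonneg_left _ hVth.le
        refine (Finset.abs_sum_le_sum_abs _ _).trans ?_
        apply le_of_eq
        exact Finset.sum_congr rfl fun j _ => abs_mul _ _
    _ = Vth * ∑ j, (∑ t, |M t j|) * |d j| := by
        rw [← Finset.mul_sum]
        congr 1
        rw [Finset.sum_comm]
        exact Finset.sum_congr rfl fun j _ => (Finset.sum_mul _ _ _).symm
    _ ≤ Vth * ∑ j, G * (Lα * |u₁ j - u₂ j|) := by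
        apply mul_le_mul_of_nonneg_left _ hVth.le
        apply Finset.sum_le_sum
        intro j _
        have h1 : (∑ t, |M t j|) * |d j| ≤ G * |d j| :=
          mul_le_mul_of_nonneg_right (col_sum_le T lam hlam0 j) (abs_nonneg _)
        refine h1.trans (mul_le_mul_of_nonneg_left ?_ hGnonneg)
        have := hS (u₁ j - Vth) (u₂ j - Vth)
        simpa [hd, sub_sub_sub_cancel_right] using this
    _ = Vth * Lα * (lam * (1 - lam ^ (T - 1)) / (1 - lam)) * ∑ t, |u₁ t - u₂ t| := by
        rw [← hGval, ← Finset.mul_sum, Finset.mul_sum, Finset.mul_sum]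
        rw [Finset.mul_sum]
        exact Finset.sum_congr rfl fun t _ => by ring
end

section
/- Let T ≥ 1 be an integer, 0 < λ < 1, V_th > 0, let Λ ∈ ℝ^{T×T} be the decay matrix with entries Λ_{ij} = λ^{i−j} for i ≥ j and 0 otherwise, let S : ℝ → ℝ be Lipschitz with constant L_α (applied entrywise), and let c ∈ ℝ^T. Suppose L := V_th · L_α · λ(1 − λ^{T−1})/(1 − λ) < 1, and let u_* be the unique fixed point of Φ̂(u) = −V_th(Λ − I)S(u − V_th·𝟙) + Λc. Then for any initial vector u_{(0)} ∈ ℝ^T, the iterates u_{(k)} = Φ̂(u_{(k−1)}) satisfy the geometric error bound ‖u_{(k)} − u_*‖₁ ≤ L^k ‖u_{(0)} − u_*‖₁ for all k ≥ 0. -/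
theorem stmt_8 (T : ℕ) (hT : 1 ≤ T) (lam Vth Lα : ℝ)
    (hlam0 : 0 < lam) (hlam1 : lam < 1) (hVth : 0 < Vth)
    (S : ℝ → ℝ) (hS : ∀ x y : ℝ, |S x - S y| ≤ Lα * |x - y|)
    (c : Fin T → ℝ)
    (hL : Vth * Lα * (lam * (1 - lam ^ (T - 1)) / (1 - lam)) < 1)
    (ustar : Fin T → ℝ) (hfix : PhiHat T lam Vth S c ustar = ustar) :
    ∀ u₀ : Fin T → ℝ, ∀ k : ℕ,
      ∑ t, |(PhiHat T lam Vth S c)^[k] u₀ t - ustar t| ≤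
        (Vth * Lα * (lam * (1 - lam ^ (T - 1)) / (1 - lam))) ^ k *
          ∑ t, |u₀ t - ustar t| := by
  set L := Vth * Lα * (lam * (1 - lam ^ (T - 1)) / (1 - lam)) with hLdef
  have hne1 : lam ≠ 1 := ne_of_lt hlam1
  have h1lam : (0:ℝ) < 1 - lam := by linarith
  have hLα : 0 ≤ Lα := by
    have h := hS 1 0
    have h0 : (0:ℝ) ≤ |S 1 - S 0| := abs_nonneg _
    simp only [sub_zero, abs_one, mul_one] at h
    linarith
  -- geometric sum identity
  have hGeq : ∑ d ∈ Finset.range (T - 1), lam ^ (d + 1)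
      = lam * (1 - lam ^ (T - 1)) / (1 - lam) := by
    have h1 : ∑ d ∈ Finset.range (T - 1), lam ^ (d + 1)
        = lam * ∑ d ∈ Finset.range (T - 1), lam ^ d := by
      rw [Finset.mul_sum]
      exact Finset.sum_congr rfl fun d _ => by ring
    rw [h1, geom_sum_eq hne1]
    have h2 : lam - 1 ≠ 0 := sub_ne_zero.mpr hne1
    have h3 : (1:ℝ) - lam ≠ 0 := ne_of_gt h1lam
    field_simp
    ring
  have hGnn : 0 ≤ lam * (1 - lam ^ (T - 1)) / (1 - lam) := by
    rw [← hGeq]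
    exact Finset.sum_nonneg fun d _ => pow_nonneg hlam0.le _
  have hLnn : 0 ≤ L := by
    rw [hLdef]
    positivity
  -- column-sum bound for M = Λ - I
  have hcol : ∀ j : Fin T, ∑ t : Fin T, |(decayMatrix T lam - 1) t j|
      ≤ lam * (1 - lam ^ (T - 1)) / (1 - lam) := by
    intro j
    rw [← hGeq]
    have habs : ∀ t : Fin T, |(decayMatrix T lam - 1) t j|
        = if (j : ℕ) < (t : ℕ) then lam ^ ((t : ℕ) - (j : ℕ)) else 0 := by
      intro t
      have : (decayMatrix T lam - 1) t j = decayMatrix T lam t j - (if t = j then 1 else 0) := by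
        simp [Matrix.sub_apply, Matrix.one_apply]
      rw [this, decayMatrix]
      rcases lt_trichotomy (j : ℕ) (t : ℕ) with h | h | h
      · have htj : t ≠ j := fun e => by simp [e] at h
        simp only [if_pos h.le, if_neg htj, if_pos h, sub_zero]
        exact abs_of_nonneg (pow_nonneg hlam0.le _)
      · have htj : t = j := Fin.ext (by omega)
        simp [htj, h.not_lt, Nat.sub_self]
      · have h1' : ¬ (j : ℕ) ≤ (t : ℕ) := by omega
        have h2' : t ≠ j := fun e => absurd (congrArg Fin.val e) (by omega)
        have h3' : ¬ (j : ℕ) < (t : ℕ) := by omega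
        simp [h1', h2', h3']
    calc ∑ t : Fin T, |(decayMatrix T lam - 1) t j|
        = ∑ t : Fin T, (if (j : ℕ) < (t : ℕ) then lam ^ ((t : ℕ) - (j : ℕ)) else 0) :=
          Finset.sum_congr rfl fun t _ => habs t
      _ = ∑ t ∈ Finset.range T, (if (j : ℕ) < t then lam ^ (t - (j : ℕ)) else 0) :=
          Fin.sum_univ_eq_sum_range (fun t => if (j : ℕ) < t then lam ^ (t - (j : ℕ)) else 0) T
      _ = ∑ t ∈ (Finset.range T).filter (fun t => (j : ℕ) < t), lam ^ (t - (j : ℕ)) :=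
          (Finset.sum_filter _ _).symm
      _ = ∑ t ∈ Finset.Ico ((j : ℕ) + 1) T, lam ^ (t - (j : ℕ)) := by
          congr 1
          ext t
          simp [Finset.mem_Ico, Finset.mem_filter, Finset.mem_range]
          omega
      _ = ∑ d ∈ Finset.range (T - ((j : ℕ) + 1)), lam ^ (((j : ℕ) + 1 + d) - (j : ℕ)) := by
          rw [Finset.sum_Ico_eq_sum_range]
      _ = ∑ d ∈ Finset.range (T - ((j : ℕ) + 1)), lam ^ (d + 1) := by
          apply Finset.sum_congr rfl
          intro d _
          congr 1
          omega
      _ ≤ ∑ d ∈ Finset.range (T - 1), lam ^ (d + 1) := by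
          apply Finset.sum_le_sum_of_subset_of_nonneg
          · apply Finset.range_subset_range.2
            omega
          · intro d _ _
            exact pow_nonneg hlam0.le _
  -- one-step contraction
  have step : ∀ u v : Fin T → ℝ,
      ∑ t, |PhiHat T lam Vth S c u t - PhiHat T lam Vth S c v t| ≤ L * ∑ t, |u t - v t| := by
    intro u v
    have hdiff : ∀ t, PhiHat T lam Vth S c u t - PhiHat T lam Vth S c v t
        = (-Vth) * ∑ j, (decayMatrix T lam - 1) t j * (S (u j - Vth) - S (v j - Vth)) := by
      intro t
      simp only [PhiHat, Matrix.mulVec, dotProduct]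
      rw [show ∀ x y q : ℝ, (-Vth) * x + q - ((-Vth) * y + q) = (-Vth) * (x - y) from
        fun x y q => by ring]
      congr 1
      rw [← Finset.sum_sub_distrib]
      exact Finset.sum_congr rfl fun j _ => (mul_sub _ _ _).symm
    calc ∑ t, |PhiHat T lam Vth S c u t - PhiHat T lam Vth S c v t|
        ≤ ∑ t, Vth * ∑ j, |(decayMatrix T lam - 1) t j| * (Lα * |u j - v j|) := by
          apply Finset.sum_le_sum
          intro t _
          rw [hdiff t, abs_mul, abs_neg, abs_of_pos hVth]
          apply mul_le_mul_of_nonneg_left _ hVth.le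
          calc |∑ j, (decayMatrix T lam - 1) t j * (S (u j - Vth) - S (v j - Vth))|
              ≤ ∑ j, |(decayMatrix T lam - 1) t j * (S (u j - Vth) - S (v j - Vth))| :=
                Finset.abs_sum_le_sum_abs _ _
            _ ≤ ∑ j, |(decayMatrix T lam - 1) t j| * (Lα * |u j - v j|) := by
                apply Finset.sum_le_sum
                intro j _
                rw [abs_mul]
                apply mul_le_mul_of_nonneg_left _ (abs_nonneg _)
                have h := hS (u j - Vth) (v j - Vth)
                have he : u j - Vth - (v j - Vth) = u j - v j := by ring
                rwa [he] at h
      _ = ∑ j, (∑ t, |(decayMatrix T lam - 1) t j|) * (Vth * (Lα * |u j - v j|)) := by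
          simp_rw [Finset.mul_sum]
          rw [Finset.sum_comm]
          apply Finset.sum_congr rfl
          intro j _
          rw [Finset.sum_mul]
          apply Finset.sum_congr rfl
          intro t _
          ring
      _ ≤ ∑ j, (lam * (1 - lam ^ (T - 1)) / (1 - lam)) * (Vth * (Lα * |u j - v j|)) := by
          apply Finset.sum_le_sum
          intro j _
          apply mul_le_mul_of_nonneg_right (hcol j)
          positivity
      _ = L * ∑ t, |u t - v t| := by
          rw [hLdef, Finset.mul_sum]
          apply Finset.sum_congr rfl
          intro j _
          ring
  -- induction
  intro u₀ k
  induction k with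
  | zero => simp
  | succ n ih =>
    rw [Function.iterate_succ_apply']
    calc ∑ t, |PhiHat T lam Vth S c ((PhiHat T lam Vth S c)^[n] u₀) t - ustar t|
        = ∑ t, |PhiHat T lam Vth S c ((PhiHat T lam Vth S c)^[n] u₀) t
            - PhiHat T lam Vth S c ustar t| := by rw [hfix]
      _ ≤ L * ∑ t, |(PhiHat T lam Vth S c)^[n] u₀ t - ustar t| := step _ _
      _ ≤ L * (L ^ n * ∑ t, |u₀ t - ustar t|) := mul_le_mul_of_nonneg_left ih hLnn
      _ = L ^ (n + 1) * ∑ t, |u₀ t - ustar t| := by ring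
end

section
/- Let T ≥ 1 be an integer, 0 < λ < 1, V_th > 0, let Λ ∈ ℝ^{T×T} be the decay matrix with entries Λ_{ij} = λ^{i−j} for i ≥ j and 0 otherwise, let S : ℝ → ℝ be Lipschitz with constant L_α (applied entrywise), and let c ∈ ℝ^T. Suppose L := V_th · L_α · λ(1 − λ^{T−1})/(1 − λ) < 1 and let u_* be the unique fixed point of Φ̂(u) = −V_th(Λ − I)S(u − V_th·𝟙) + Λc. Then for any initial vector u_{(0)} ∈ ℝ^T the iterates u_{(k)} = Φ̂(u_{(k−1)}) satisfy the a priori error bound ‖u_{(k)} − u_*‖₁ ≤ (L^k / (1 − L)) ‖u_{(1)} − u_{(0)}‖₁ for all k ≥ 1. -/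
theorem stmt_9 (T : ℕ) (hT : 1 ≤ T) (lam Vth Lα : ℝ)
    (hlam0 : 0 < lam) (hlam1 : lam < 1) (hVth : 0 < Vth)
    (S : ℝ → ℝ) (hS : ∀ x y : ℝ, |S x - S y| ≤ Lα * |x - y|)
    (c : Fin T → ℝ)
    (hL : Vth * Lα * (lam * (1 - lam ^ (T - 1)) / (1 - lam)) < 1)
    (ustar : Fin T → ℝ) (hfix : PhiHat T lam Vth S c ustar = ustar) :
    ∀ u₀ : Fin T → ℝ, ∀ k : ℕ, 1 ≤ k →
      ∑ t, |(PhiHat T lam Vth S c)^[k] u₀ t - ustar t| ≤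
        (Vth * Lα * (lam * (1 - lam ^ (T - 1)) / (1 - lam))) ^ k /
            (1 - Vth * Lα * (lam * (1 - lam ^ (T - 1)) / (1 - lam))) *
          ∑ t, |PhiHat T lam Vth S c u₀ t - u₀ t| := by
  set L := Vth * Lα * (lam * (1 - lam ^ (T - 1)) / (1 - lam)) with hLdef
  set Φ := PhiHat T lam Vth S c with hΦ
  have hlamne : lam ≠ 1 := ne_of_lt hlam1
  have h1lam : (0:ℝ) < 1 - lam := by linarith
  have hLα : 0 ≤ Lα := by
    have h := hS 1 0
    have h0 : (0:ℝ) ≤ Lα * |(1:ℝ) - 0| := le_trans (abs_nonneg _) h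
    simpa using h0
  have hfac : 0 ≤ lam * (1 - lam ^ (T - 1)) / (1 - lam) := by
    apply div_nonneg _ h1lam.le
    apply mul_nonneg hlam0.le
    have : lam ^ (T - 1) ≤ 1 := pow_le_one₀ hlam0.le hlam1.le
    linarith
  have hL0 : 0 ≤ L := mul_nonneg (mul_nonneg hVth.le hLα) hfac
  -- entries of |Λ - 1|
  have hent : ∀ i j : Fin T, |(decayMatrix T lam - 1) i j| =
      if (j : ℕ) < (i : ℕ) then lam ^ ((i : ℕ) - (j : ℕ)) else 0 := by
    intro i j
    simp only [Matrix.sub_apply, Matrix.one_apply, decayMatrix]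
    rcases lt_trichotomy (j : ℕ) (i : ℕ) with h | h | h
    · have hij : i ≠ j := by intro e; subst e; omega
      rw [if_pos h.le, if_neg hij, if_pos h]
      rw [sub_zero, abs_of_pos (pow_pos hlam0 _)]
    · have hij : i = j := Fin.ext h.symm
      subst hij; simp
    · have hij : i ≠ j := by intro e; subst e; omega
      rw [if_neg (by omega), if_neg hij, if_neg (by omega)]
      simp
  -- column sums
  have hcol : ∀ j : Fin T, (∑ i : Fin T, |(decayMatrix T lam - 1) i j|) ≤
      lam * (1 - lam ^ (T - 1)) / (1 - lam) := by
    intro j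
    have e1 : (∑ i : Fin T, |(decayMatrix T lam - 1) i j|) =
        ∑ i ∈ Finset.range T, (if (j : ℕ) < i then lam ^ (i - (j : ℕ)) else 0) := by
      rw [Finset.sum_congr rfl (fun i _ => hent i j)]
      exact Fin.sum_univ_eq_sum_range (fun i => if (j : ℕ) < i then lam ^ (i - (j : ℕ)) else 0) T
    have e2 : ∑ i ∈ Finset.range T, (if (j : ℕ) < i then lam ^ (i - (j : ℕ)) else 0) =
        ∑ i ∈ Finset.Ico ((j : ℕ) + 1) T, lam ^ (i - (j : ℕ)) := by
      rw [← Finset.sum_filter]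
      apply Finset.sum_congr _ (fun _ _ => rfl)
      ext i
      simp only [Finset.mem_filter, Finset.mem_range, Finset.mem_Ico]
      omega
    have e3 : ∑ i ∈ Finset.Ico ((j : ℕ) + 1) T, lam ^ (i - (j : ℕ)) =
        ∑ i ∈ Finset.range (T - ((j : ℕ) + 1)), lam ^ (i + 1) := by
      rw [Finset.sum_Ico_eq_sum_range]
      apply Finset.sum_congr rfl
      intro i _
      congr 1
      omega
    have e4 : ∑ i ∈ Finset.range (T - ((j : ℕ) + 1)), lam ^ (i + 1) ≤
        ∑ i ∈ Finset.range (T - 1), lam ^ (i + 1) := by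
      apply Finset.sum_le_sum_of_subset_of_nonneg
      · exact Finset.range_subset_range.mpr (by omega)
      · intro i _ _; positivity
    have e5 : ∑ i ∈ Finset.range (T - 1), lam ^ (i + 1) =
        lam * (1 - lam ^ (T - 1)) / (1 - lam) := by
      have : ∑ i ∈ Finset.range (T - 1), lam ^ (i + 1) =
          lam * ∑ i ∈ Finset.range (T - 1), lam ^ i := by
        rw [Finset.mul_sum]
        apply Finset.sum_congr rfl
        intro i _; ring
      rw [this, geom_sum_eq hlamne]
      rw [show (lam ^ (T - 1) - 1) / (lam - 1) = (1 - lam ^ (T - 1)) / (1 - lam) by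
        rw [div_eq_div_iff (by linarith) (by linarith)]; ring]
      rw [mul_div_assoc]
    rw [e1, e2, e3, ← e5]
    exact e4
  -- Lipschitz bound in ℓ¹
  have hlip : ∀ u v : Fin T → ℝ,
      (∑ t, |Φ u t - Φ v t|) ≤ L * ∑ t, |u t - v t| := by
    intro u v
    have step : ∀ t : Fin T, |Φ u t - Φ v t| ≤
        ∑ i, |(decayMatrix T lam - 1) t i| * (Vth * Lα * |u i - v i|) := by
      intro t
      have expand : Φ u t - Φ v t =
          (-Vth) * ∑ i, (decayMatrix T lam - 1) t i *
            (S (u i - Vth) - S (v i - Vth)) := by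
        have hu : Φ u t = (-Vth) * (∑ i, (decayMatrix T lam - 1) t i * S (u i - Vth))
            + ∑ i, decayMatrix T lam t i * c i := rfl
        have hv : Φ v t = (-Vth) * (∑ i, (decayMatrix T lam - 1) t i * S (v i - Vth))
            + ∑ i, decayMatrix T lam t i * c i := rfl
        rw [hu, hv,
          show (∑ i, (decayMatrix T lam - 1) t i * (S (u i - Vth) - S (v i - Vth)))
            = (∑ i, (decayMatrix T lam - 1) t i * S (u i - Vth))
              - ∑ i, (decayMatrix T lam - 1) t i * S (v i - Vth) by
            rw [← Finset.sum_sub_distrib]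
            exact Finset.sum_congr rfl (fun i _ => by ring)]
        ring
      rw [expand, abs_mul, abs_neg, abs_of_pos hVth]
      calc Vth * |∑ i, (decayMatrix T lam - 1) t i * (S (u i - Vth) - S (v i - Vth))|
          ≤ Vth * ∑ i, |(decayMatrix T lam - 1) t i * (S (u i - Vth) - S (v i - Vth))| := by
            apply mul_le_mul_of_nonneg_left (Finset.abs_sum_le_sum_abs _ _) hVth.le
        _ ≤ ∑ i, |(decayMatrix T lam - 1) t i| * (Vth * Lα * |u i - v i|) := by
            rw [Finset.mul_sum]
            apply Finset.sum_le_sum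
            intro i _
            rw [abs_mul]
            have h1 : |S (u i - Vth) - S (v i - Vth)| ≤ Lα * |u i - v i| := by
              have := hS (u i - Vth) (v i - Vth)
              simpa using this
            calc Vth * (|(decayMatrix T lam - 1) t i| * |S (u i - Vth) - S (v i - Vth)|)
                ≤ Vth * (|(decayMatrix T lam - 1) t i| * (Lα * |u i - v i|)) := by
                  apply mul_le_mul_of_nonneg_left _ hVth.le
                  exact mul_le_mul_of_nonneg_left h1 (abs_nonneg _)
              _ = |(decayMatrix T lam - 1) t i| * (Vth * Lα * |u i - v i|) := by ring
    calc (∑ t, |Φ u t - Φ v t|)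
        ≤ ∑ t, ∑ i, |(decayMatrix T lam - 1) t i| * (Vth * Lα * |u i - v i|) :=
          Finset.sum_le_sum (fun t _ => step t)
      _ = ∑ i, (∑ t, |(decayMatrix T lam - 1) t i|) * (Vth * Lα * |u i - v i|) := by
          rw [Finset.sum_comm]
          apply Finset.sum_congr rfl
          intro i _
          rw [Finset.sum_mul]
      _ ≤ ∑ i, (lam * (1 - lam ^ (T - 1)) / (1 - lam)) * (Vth * Lα * |u i - v i|) := by
          apply Finset.sum_le_sum
          intro i _
          apply mul_le_mul_of_nonneg_right (hcol i)
          positivity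
      _ = L * ∑ i, |u i - v i| := by
          rw [Finset.mul_sum]
          apply Finset.sum_congr rfl
          intro i _
          rw [hLdef]; ring
  -- iterated bound
  have hiter : ∀ u₀ : Fin T → ℝ, ∀ k : ℕ,
      (∑ t, |Φ^[k] u₀ t - ustar t|) ≤ L ^ k * ∑ t, |u₀ t - ustar t| := by
    intro u₀ k
    induction k with
    | zero => simp
    | succ n ih =>
      rw [Function.iterate_succ_apply']
      calc (∑ t, |Φ (Φ^[n] u₀) t - ustar t|)
          = ∑ t, |Φ (Φ^[n] u₀) t - Φ ustar t| := by rw [show Φ ustar = ustar from hfix]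
        _ ≤ L * ∑ t, |Φ^[n] u₀ t - ustar t| := hlip _ _
        _ ≤ L * (L ^ n * ∑ t, |u₀ t - ustar t|) := mul_le_mul_of_nonneg_left ih hL0
        _ = L ^ (n + 1) * ∑ t, |u₀ t - ustar t| := by ring
  intro u₀ k hk
  have hbase : (∑ t, |u₀ t - ustar t|) ≤ (∑ t, |Φ u₀ t - u₀ t|) / (1 - L) := by
    have htri : (∑ t, |u₀ t - ustar t|) ≤
        (∑ t, |u₀ t - Φ u₀ t|) + ∑ t, |Φ u₀ t - ustar t| := by
      rw [← Finset.sum_add_distrib]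
      exact Finset.sum_le_sum (fun t _ => abs_sub_le _ _ _)
    have hstep : (∑ t, |Φ u₀ t - ustar t|) ≤ L * ∑ t, |u₀ t - ustar t| := by
      calc (∑ t, |Φ u₀ t - ustar t|) = ∑ t, |Φ u₀ t - Φ ustar t| := by
            rw [show Φ ustar = ustar from hfix]
        _ ≤ L * ∑ t, |u₀ t - ustar t| := hlip _ _
    have hcomm : (∑ t, |u₀ t - Φ u₀ t|) = ∑ t, |Φ u₀ t - u₀ t| :=
      Finset.sum_congr rfl (fun t _ => abs_sub_comm _ _)
    rw [le_div_iff₀ (by linarith)]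
    nlinarith [htri, hstep]
  calc (∑ t, |Φ^[k] u₀ t - ustar t|) ≤ L ^ k * ∑ t, |u₀ t - ustar t| := hiter u₀ k
    _ ≤ L ^ k * ((∑ t, |Φ u₀ t - u₀ t|) / (1 - L)) :=
        mul_le_mul_of_nonneg_left hbase (pow_nonneg hL0 k)
    _ = L ^ k / (1 - L) * ∑ t, |Φ u₀ t - u₀ t| := by ring
end

section
/- Let T ≥ 1 be an integer, 0 < λ < 1, V_th > 0, let Λ ∈ ℝ^{T×T} be the decay matrix with entries Λ_{ij} = λ^{i−j} for i ≥ j and 0 otherwise, let S : ℝ → ℝ be any bounded function with 0 ≤ S(x) ≤ 1 for all x (applied entrywise), and let c ∈ ℝ^T. Then every iterate u_{(k)} = −V_th(Λ − I)S(u_{(k−1)} − V_th·𝟙) + Λc, for k ≥ 1 and any u_{(0)} ∈ ℝ^T, lies in the bounded set {u ∈ ℝ^T : ‖u − Λc‖₁ ≤ V_th · λ(1 − λ^{T−1})/(1 − λ) · T}; in particular, the iteration sequence is bounded. -/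
lemma key_bound (T : ℕ) (lam : ℝ) (hlam0 : 0 < lam) (hlam1 : lam < 1)
    (t : Fin T) (v : Fin T → ℝ) (hv : ∀ j, 0 ≤ v j ∧ v j ≤ 1) :
    |((decayMatrix T lam - 1).mulVec v) t| ≤ lam * (1 - lam ^ (T - 1)) / (1 - lam) := by
  have h1 : (1:ℝ) - lam > 0 := by linarith
  have habs : ∀ j : Fin T, |(decayMatrix T lam - 1) t j * v j| ≤
      (if (j:ℕ) < (t:ℕ) then lam ^ ((t:ℕ) - (j:ℕ)) else 0) := by
    intro j
    have hvj := hv j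
    have hvabs : |v j| ≤ 1 := by rw [abs_le]; constructor <;> linarith [hvj.1, hvj.2]
    rw [abs_mul]
    have hentry : (decayMatrix T lam - 1) t j =
        (if (j:ℕ) ≤ (t:ℕ) then lam ^ ((t:ℕ) - (j:ℕ)) else 0) - (if t = j then 1 else 0) := by
      simp [decayMatrix, Matrix.sub_apply, Matrix.one_apply]
    by_cases hlt : (j:ℕ) < (t:ℕ)
    · have hne : t ≠ j := by intro h; subst h; exact lt_irrefl _ hlt
      rw [hentry, if_pos (le_of_lt hlt), if_neg hne, if_pos hlt, sub_zero,
        abs_of_nonneg (by positivity)]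
      calc lam ^ ((t:ℕ) - (j:ℕ)) * |v j| ≤ lam ^ ((t:ℕ) - (j:ℕ)) * 1 :=
            mul_le_mul_of_nonneg_left hvabs (by positivity)
        _ = lam ^ ((t:ℕ) - (j:ℕ)) := mul_one _
    · rw [if_neg hlt]
      by_cases heq : t = j
      · subst heq
        rw [hentry]
        simp [if_neg hlt]
      · have hle : ¬ (j:ℕ) ≤ (t:ℕ) := by
          intro h
          rcases lt_or_eq_of_le h with h' | h'
          · exact hlt h'
          · exact heq (Fin.ext h'.symm)
        rw [hentry, if_neg hle, if_neg heq]
        simp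
  have hsum : |((decayMatrix T lam - 1).mulVec v) t| ≤
      ∑ j : Fin T, (if (j:ℕ) < (t:ℕ) then lam ^ ((t:ℕ) - (j:ℕ)) else 0) := by
    rw [Matrix.mulVec, dotProduct]
    exact (Finset.abs_sum_le_sum_abs _ _).trans (Finset.sum_le_sum fun j _ => habs j)
  refine hsum.trans ?_
  have hre : ∑ j : Fin T, (if (j:ℕ) < (t:ℕ) then lam ^ ((t:ℕ) - (j:ℕ)) else 0) =
      ∑ j ∈ Finset.range (t:ℕ), lam ^ ((t:ℕ) - j) := by
    rw [Fin.sum_univ_eq_sum_range (fun j => if j < (t:ℕ) then lam ^ ((t:ℕ) - j) else 0)]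
    rw [← Finset.sum_subset (Finset.range_subset_range.mpr (le_of_lt t.isLt))
      (fun x _ hx => if_neg (by simp at hx ⊢; omega))]
    exact Finset.sum_congr rfl fun j hj => if_pos (Finset.mem_range.mp hj)
  rw [hre]
  have hre2 : ∑ j ∈ Finset.range (t:ℕ), lam ^ ((t:ℕ) - j) =
      ∑ j ∈ Finset.range (t:ℕ), lam ^ (j + 1) := by
    rw [← Finset.sum_range_reflect (fun j => lam ^ (j + 1)) (t:ℕ)]
    refine Finset.sum_congr rfl fun j hj => ?_
    have := Finset.mem_range.mp hj
    congr 1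
    omega
  rw [hre2]
  have hgeom : ∑ j ∈ Finset.range (t:ℕ), lam ^ (j + 1) =
      lam * ((1 - lam ^ (t:ℕ)) / (1 - lam)) := by
    have : ∑ j ∈ Finset.range (t:ℕ), lam ^ (j + 1) =
        lam * ∑ j ∈ Finset.range (t:ℕ), lam ^ j := by
      rw [Finset.mul_sum]
      exact Finset.sum_congr rfl fun j _ => by ring
    rw [this, geom_sum_eq (ne_of_lt hlam1)]
    have hne : lam - 1 ≠ 0 := by linarith
    have h1ne : (1:ℝ) - lam ≠ 0 := by linarith
    congr 1
    rw [div_eq_div_iff hne h1ne]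
    ring
  rw [hgeom]
  have h2 : lam ^ (T - 1) ≤ lam ^ (t:ℕ) :=
    pow_le_pow_of_le_one hlam0.le hlam1.le (by have := t.isLt; omega)
  rw [mul_div_assoc]
  gcongr

theorem stmt_15 (T : ℕ) (hT : 1 ≤ T) (lam Vth : ℝ)
    (hlam0 : 0 < lam) (hlam1 : lam < 1) (hVth : 0 < Vth)
    (S : ℝ → ℝ) (hS : ∀ x : ℝ, 0 ≤ S x ∧ S x ≤ 1)
    (c : Fin T → ℝ) :
    ∀ u₀ : Fin T → ℝ, ∀ k : ℕ, 1 ≤ k →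
      ∑ t, |(PhiHat T lam Vth S c)^[k] u₀ t - ((decayMatrix T lam).mulVec c) t| ≤
        Vth * (lam * (1 - lam ^ (T - 1)) / (1 - lam)) * T := by
  intro u₀ k hk
  obtain ⟨n, rfl⟩ : ∃ n, k = n + 1 := ⟨k - 1, by omega⟩
  rw [Function.iterate_succ_apply']
  set u := (PhiHat T lam Vth S c)^[n] u₀
  have hpt : ∀ t : Fin T, |PhiHat T lam Vth S c u t - ((decayMatrix T lam).mulVec c) t| ≤
      Vth * (lam * (1 - lam ^ (T - 1)) / (1 - lam)) := by
    intro t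
    have heq : PhiHat T lam Vth S c u t - ((decayMatrix T lam).mulVec c) t =
        (-Vth) * ((decayMatrix T lam - 1).mulVec (fun i => S (u i - Vth))) t := by
      simp [PhiHat]
    rw [heq, abs_mul, abs_neg, abs_of_pos hVth]
    exact mul_le_mul_of_nonneg_left
      (key_bound T lam hlam0 hlam1 t (fun i => S (u i - Vth)) (fun j => hS _)) hVth.le
  calc ∑ t, |PhiHat T lam Vth S c u t - ((decayMatrix T lam).mulVec c) t|
      ≤ ∑ _t : Fin T, Vth * (lam * (1 - lam ^ (T - 1)) / (1 - lam)) :=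
        Finset.sum_le_sum fun t _ => hpt t
    _ = Vth * (lam * (1 - lam ^ (T - 1)) / (1 - lam)) * T := by
        rw [Finset.sum_const, Finset.card_univ, Fintype.card_fin]
        ring
end
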